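/- arXiv:1412.6958 — 2 statements merged into one kernel-verified Lean document; each statement's English description precedes it below -/
import Mathlib

section
/- Let G be a triangulated Laman graph on n vertices. Then every strongly rigid configuration p ∈ P_G is infinitesimally rigid, i.e., the Jacobian matrix ∂ρ_G(p)/∂p of the distance map has rank 2n − 3; moreover, the set of strongly rigid configurations is an open dense subset of P_G. -/
open scoped BigOperators

noncomputable section

/-- Points in the Euclidean plane. -/
abbrev Pt : Type := EuclideanSpace ℝ (Fin 2)

/-- The flattened space of planar configurations indexed by `ι`
(two real coordinates for each vertex). -/
abbrev Conf (ι : Type*) : Type _ := EuclideanSpace ℝ (ι × Fin 2)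

/-- The position of agent `i` in the configuration `p`. -/
def pt {ι : Type*} (p : Conf ι) (i : ι) : Pt := WithLp.toLp 2 (fun c => p (i, c))

/-- The sub-configuration of `p` on the vertices in `S`. -/
def restr {ι : Type*} (S : Set ι) (p : Conf ι) : Conf ↥S := WithLp.toLp 2 (fun ic => p ((ic.1 : ι), ic.2))

/-- The configuration space `P_G`: embeddings of the vertex set in the plane for which
adjacent vertices have distinct positions. -/
def configSpace {ι : Type*} (G : SimpleGraph ι) : Set (Conf ι) :=
  {p | ∀ i j : ι, G.Adj i j → pt p i ≠ pt p j}

/-- A Henneberg sequence for a triangulated Laman graph `G`, encoded by the order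
`ord` in which the vertices appear, and for every step `l ≥ 2` the two earlier steps
`par1 l`, `par2 l`, whose (adjacent) vertices the new vertex `ord l` is joined to.
The edges of `G` are exactly the initial edge together with the edges created at
each step. -/
structure Henneberg {ι : Type*} (G : SimpleGraph ι) : Type _ where
  two_le : 2 ≤ Nat.card ι
  ord : Fin (Nat.card ι) ≃ ι
  par1 : Fin (Nat.card ι) → Fin (Nat.card ι)
  par2 : Fin (Nat.card ι) → Fin (Nat.card ι)
  par1_lt : ∀ l : Fin (Nat.card ι), 2 ≤ (l : ℕ) → par1 l < l
  par2_lt : ∀ l : Fin (Nat.card ι), 2 ≤ (l : ℕ) → par2 l < l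
  par_ne : ∀ l : Fin (Nat.card ι), 2 ≤ (l : ℕ) → par1 l ≠ par2 l
  par_adj : ∀ l : Fin (Nat.card ι), 2 ≤ (l : ℕ) → G.Adj (ord (par1 l)) (ord (par2 l))
  edge_iff : ∀ i j : ι, G.Adj i j ↔
    (s(i, j) = s(ord ⟨0, by omega⟩, ord ⟨1, by omega⟩) ∨
      ∃ l : Fin (Nat.card ι), 2 ≤ (l : ℕ) ∧
        (s(i, j) = s(ord (par1 l), ord l) ∨ s(i, j) = s(ord (par2 l), ord l)))

/-- A graph is a triangulated Laman graph if it is (essentially) a single vertex, or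
it can be built by a Henneberg sequence in which each new vertex is joined to the two
endpoints of an existing edge. -/
def IsTriangulatedLaman {ι : Type*} (G : SimpleGraph ι) : Prop :=
  Nat.card ι ≤ 1 ∨ Nonempty (Henneberg G)

open Classical in
/-- The potential `Φ` induced by `G`, with control laws `f i j = u_{ij}(⬝, d̄_{ij})`:
`Φ(p) = Σ_{(i,j) ∈ E} ∫_1^{‖x_i - x_j‖} s u_{ij}(s, d̄_{ij}) ds`
(each edge is counted once; the double sum counts it twice, whence the factor 1/2). -/
def potential {ι : Type*} [Fintype ι] (G : SimpleGraph ι) (f : ι → ι → ℝ → ℝ)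
    (p : Conf ι) : ℝ :=
  (1 / 2) * ∑ i : ι, ∑ j : ι,
    if G.Adj i j then ∫ s in (1 : ℝ)..(dist (pt p i) (pt p j)), s * f i j s else 0

open Classical in
/-- The right-hand side of the formation control system
`ẋ_i = Σ_{j ∈ N_i} u_{ij}(‖x_i - x_j‖, d̄_{ij}) (x_j - x_i)`. -/
def formationField {ι : Type*} [Fintype ι] (G : SimpleGraph ι) (f : ι → ι → ℝ → ℝ)
    (p : Conf ι) : Conf ι :=
  WithLp.toLp 2 (fun ic => ∑ j : ι,
    if G.Adj ic.1 j then f ic.1 j (dist (pt p ic.1) (pt p j)) * (p (j, ic.2) - p (ic.1, ic.2))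
    else 0)

/-- A monotone attraction/repulsion function: `f` is C¹ on `ℝ_{>0}`,
`d(x f(x))/dx > 0` for `x > 0`, `f` has a unique (positive) zero, and
`∫_x^1 s f(s) ds → -∞` as `x → 0⁺`. -/
structure IsMonoAttRep (f : ℝ → ℝ) : Prop where
  contDiff : ContDiffOn ℝ 1 f (Set.Ioi 0)
  deriv_pos : ∀ x : ℝ, 0 < x → 0 < deriv (fun y => y * f y) x
  unique_zero : ∃! x : ℝ, 0 < x ∧ f x = 0
  collision : Filter.Tendsto (fun x : ℝ => ∫ s in x..(1 : ℝ), s * f s)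
    (nhdsWithin 0 (Set.Ioi 0)) Filter.atBot

/-- 2×2 rotation matrices. -/
def IsRotation (θ : Matrix (Fin 2) (Fin 2) ℝ) : Prop := θ * θ.transpose = 1 ∧ θ.det = 1

/-- The action of `γ = (θ, v) ∈ SE(2)` on configurations: `γ·p = (θ x_1 + v, …, θ x_n + v)`. -/
def se2Act {ι : Type*} (θ : Matrix (Fin 2) (Fin 2) ℝ) (v : Pt) (p : Conf ι) : Conf ι :=
  WithLp.toLp 2 (fun ic => θ.mulVec (pt p ic.1) ic.2 + v ic.2)

/-- The SE(2)-orbit `O_p` of a configuration `p`. -/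
def se2Orbit {ι : Type*} (p : Conf ι) : Set (Conf ι) :=
  {q | ∃ θ v, IsRotation θ ∧ q = se2Act θ v p}

/-- Rotation by 90 degrees. -/
def rotJ : Matrix (Fin 2) (Fin 2) ℝ := !![0, -1; 1, 0]

/-- The infinitesimal rotation of a configuration. -/
def infRot {ι : Type*} (p : Conf ι) : Conf ι := WithLp.toLp 2 (fun ic => rotJ.mulVec (pt p ic.1) ic.2)

/-- The infinitesimal translation in coordinate direction `c`. -/
def transl (ι : Type*) (c : Fin 2) : Conf ι := WithLp.toLp 2 (fun ic => if ic.2 = c then 1 else 0)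

/-- The tangent space at `p` of the SE(2)-orbit `O_p`. -/
def orbitTangent {ι : Type*} (p : Conf ι) : Submodule ℝ (Conf ι) :=
  Submodule.span ℝ {infRot p, transl ι 0, transl ι 1}

/-- The Hessian matrix `H_p = ∂²Φ(p)/∂p²`. -/
def hessianMat {ι : Type*} [Fintype ι] [DecidableEq ι] (Φ : Conf ι → ℝ) (p : Conf ι) :
    Matrix (ι × Fin 2) (ι × Fin 2) ℝ :=
  Matrix.of fun a b =>
    iteratedFDeriv ℝ 2 Φ p ![EuclideanSpace.single a 1, EuclideanSpace.single b 1]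

/-- The Hessian of `Φ` at `p` with respect to the coordinates of the vertices in `S`
(for `Φ` depending only on those coordinates this is the Hessian of the induced
function of the positions of the vertices in `S`). -/
def hessianMatOn {ι : Type*} [Fintype ι] [DecidableEq ι] (Φ : Conf ι → ℝ) (p : Conf ι) (S : Set ι) :
    Matrix (↥S × Fin 2) (↥S × Fin 2) ℝ :=
  Matrix.of fun a b => hessianMat Φ p ((a.1 : ι), a.2) ((b.1 : ι), b.2)

open Classical in
/-- `N₊(A)`: the number of positive eigenvalues of a real symmetric matrix,
counted with multiplicity. -/
def nPos {m : Type*} [Finite m] (A : Matrix m m ℝ) : ℕ :=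
  letI := Fintype.ofFinite m
  letI := Classical.decEq m
  if h : A.IsHermitian then Fintype.card {i // 0 < h.eigenvalues i} else 0

open Classical in
/-- `N₋(A)`: the number of negative eigenvalues of a real symmetric matrix,
counted with multiplicity. -/
def nNeg {m : Type*} [Finite m] (A : Matrix m m ℝ) : ℕ :=
  letI := Fintype.ofFinite m
  letI := Classical.decEq m
  if h : A.IsHermitian then Fintype.card {i // h.eigenvalues i < 0} else 0

open Classical in
/-- `N₀(A)`: the number of zero eigenvalues of a real symmetric matrix,
counted with multiplicity. -/
def nZero {m : Type*} [Finite m] (A : Matrix m m ℝ) : ℕ :=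
  letI := Fintype.ofFinite m
  letI := Classical.decEq m
  if h : A.IsHermitian then Fintype.card {i // h.eigenvalues i = 0} else 0

/-- `Φ` is an equivariant Morse function on `P_G`: it has finitely many critical orbits,
and each critical orbit is nondegenerate (the Hessian has exactly three zero eigenvalues). -/
def IsEquivariantMorse {ι : Type*} [Fintype ι] [DecidableEq ι] (G : SimpleGraph ι)
    (Φ : Conf ι → ℝ) : Prop :=
  {O : Set (Conf ι) | ∃ p ∈ configSpace G, gradient Φ p = 0 ∧ O = se2Orbit p}.Finite ∧
  ∀ p ∈ configSpace G, gradient Φ p = 0 → nZero (hessianMat Φ p) = 3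

/-- `i`, `j`, `k` form a 3-cycle of `G`. -/
def Is3Cycle {ι : Type*} (G : SimpleGraph ι) (i j k : ι) : Prop :=
  G.Adj i j ∧ G.Adj i k ∧ G.Adj j k

/-- A framework `(G, p)` is strongly rigid if every 3-cycle of `G` is embedded by `p`
as a nondegenerate triangle. -/
def StronglyRigid {ι : Type*} (G : SimpleGraph ι) (p : Conf ι) : Prop :=
  ∀ i j k : ι, Is3Cycle G i j k →
    LinearIndependent ℝ ![pt p j - pt p i, pt p k - pt p i]

/-- The target distances satisfy the strict triangle inequalities associated with `G`. -/
def StrictTriangleIneqs {ι : Type*} (G : SimpleGraph ι) (dbar : ι → ι → ℝ) : Prop :=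
  ∀ i j k : ι, Is3Cycle G i j k →
    dbar j k < dbar i j + dbar i k ∧ dbar i k < dbar i j + dbar j k ∧
      dbar i j < dbar i k + dbar j k

/-- A triangulated formation system: a formation control system induced by a
triangulated Laman graph, with target distances satisfying the strict triangle
inequalities, monotone attraction/repulsion control laws vanishing at the target
distances, and whose potential is an equivariant Morse function. -/
structure IsTriFormation {ι : Type*} [Fintype ι] [DecidableEq ι] (G : SimpleGraph ι)
    (f : ι → ι → ℝ → ℝ) (dbar : ι → ι → ℝ) : Prop where
  laman : IsTriangulatedLaman G
  fsymm : ∀ i j, f i j = f j i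
  dsymm : ∀ i j, dbar i j = dbar j i
  dpos : ∀ i j, G.Adj i j → 0 < dbar i j
  mono : ∀ i j, G.Adj i j → IsMonoAttRep (f i j)
  fzero : ∀ i j, G.Adj i j → f i j (dbar i j) = 0
  triangle : StrictTriangleIneqs G dbar
  morse : IsEquivariantMorse G (potential G f)

/-- The (critical) orbit of `p` is exponentially stable: the Hessian of `Φ` at `p` has
exactly three zero eigenvalues and no negative eigenvalues (all the others positive). -/
def ExpStableAt {ι : Type*} [Fintype ι] [DecidableEq ι] (Φ : Conf ι → ℝ) (p : Conf ι) : Prop :=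
  nZero (hessianMat Φ p) = 3 ∧ nNeg (hessianMat Φ p) = 0

/-- Generating relation for the independent partition: at each step `l ≥ 2` of the
Henneberg sequence in which the new vertex is aligned with its two parents, the two
new edges are related to the parent edge. -/
def triGen {ι : Type*} {G : SimpleGraph ι} (H : Henneberg G) (p : Conf ι) :
    Sym2 ι → Sym2 ι → Prop := fun e e' =>
  ∃ l : Fin (Nat.card ι), 2 ≤ (l : ℕ) ∧
    Collinear ℝ {pt p (H.ord (H.par1 l)), pt p (H.ord (H.par2 l)), pt p (H.ord l)} ∧
    e' = s(H.ord (H.par1 l), H.ord (H.par2 l)) ∧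
    (e = s(H.ord (H.par1 l), H.ord l) ∨ e = s(H.ord (H.par2 l), H.ord l))

/-- The independent partition of the edge set of `G` for the framework `(G, p)`,
computed along the Henneberg sequence `H`. -/
def indepPartition {ι : Type*} {G : SimpleGraph ι} (H : Henneberg G) (p : Conf ι) :
    Set (Set (Sym2 ι)) :=
  {C | ∃ e ∈ G.edgeSet, C = {e' | e' ∈ G.edgeSet ∧ Relation.EqvGen (triGen H p) e e'}}

/-- The set `V_i` of vertices incident to the edges in a class `C`. -/
def classVerts {ι : Type*} (C : Set (Sym2 ι)) : Set ι := {v | ∃ e ∈ C, v ∈ e}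

end

open Classical in
/-- The distance map `ρ_G` (extended by `0` on non-edges; repeating each edge twice and
padding with zeros does not change the rank of the Jacobian). -/
noncomputable def rhoMap {ι : Type*} [Fintype ι] (G : SimpleGraph ι) (p : Conf ι) :
    ι × ι → ℝ :=
  fun ij => if G.Adj ij.1 ij.2 then dist (pt p ij.1) (pt p ij.2) ^ 2 else 0

/-!
The Jacobian of `ρ_G` at `p` is injective exactly modulo the infinitesimal motions of `(G, p)`:
the velocities `q` with `⟪x_i - x_j, q_i - q_j⟫ = 0` on every edge. Along the Henneberg sequence,
a motion vanishing on the initial edge vanishes on every new vertex `k`, because `q_k` is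
orthogonal to the two edge vectors of its triangle, which are independent by strong rigidity.
Hence a motion is determined by three numbers (the velocity of `v₀` and the rotational part of
that of `v₁`), and the two translations and the infinitesimal rotation show that all three are
attained, so the kernel has dimension `3`. Strong rigidity is the nonvanishing of finitely many
cross products, polynomials in `p` that are not identically zero, so it is open and dense.
-/

open scoped RealInnerProductSpace

lemma eq_zero_of_inner_eq_zero_of_linearIndependent {E : Type*} [NormedAddCommGroup E]
    [InnerProductSpace ℝ E] [FiniteDimensional ℝ E] (hE : Module.finrank ℝ E = 2) {a b z : E}
    (hab : LinearIndependent ℝ ![a, b]) (ha : ⟪a, z⟫ = 0) (hb : ⟪b, z⟫ = 0) : z = 0 := by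
  let B := basisOfLinearIndependentOfCardEqFinrank hab (by simp [hE])
  refine InnerProductSpace.ext_inner_left_basis B fun i => ?_
  fin_cases i <;> simp [B, ha, hb]

lemma dense_setOf_ne_zero_of_analyticAt {E : Type*} [NormedAddCommGroup E] [NormedSpace ℝ E]
    {g : E → ℝ} (hg : ∀ x, AnalyticAt ℝ g x) (hne : ∃ x, g x ≠ 0) : Dense {x | g x ≠ 0} := by
  refine dense_iff_inter_open.mpr fun U hU ⟨x, hx⟩ => ?_
  by_contra! hempty
  have hzero : g =ᶠ[nhds x] 0 := Filter.eventually_of_mem (hU.mem_nhds hx) fun y hy => by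
    by_contra hy0
    exact hempty.subset ⟨hy, hy0⟩
  obtain ⟨y, hy⟩ := hne
  exact hy (AnalyticOnNhd.eqOn_zero_of_preconnected_of_eventuallyEq_zero (fun z _ => hg z)
    isPreconnected_univ (Set.mem_univ x) hzero (Set.mem_univ y))

namespace Pt

def cross (u v : Pt) : ℝ := u 0 * v 1 - u 1 * v 0

lemma linearIndependent_pair_iff (u v : Pt) : LinearIndependent ℝ ![u, v] ↔ cross u v ≠ 0 := by
  let e : Pt ≃ₗ[ℝ] (Fin 2 → ℝ) := WithLp.linearEquiv 2 ℝ (Fin 2 → ℝ)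
  have : (e : Pt →ₗ[ℝ] Fin 2 → ℝ) ∘ ![u, v] = (Matrix.of ![u.ofLp, v.ofLp]).row := by
    ext i : 1; fin_cases i <;> rfl
  rw [← (e : Pt →ₗ[ℝ] Fin 2 → ℝ).linearIndependent_iff e.ker, this,
    Matrix.linearIndependent_rows_iff_isUnit, Matrix.isUnit_iff_isUnit_det, Matrix.det_fin_two,
    isUnit_iff_ne_zero]
  simp [cross]

noncomputable def rot : Pt →ₗ[ℝ] Pt := Matrix.toEuclideanLin rotJ

lemma rot_apply_zero (x : Pt) : rot x 0 = - x 1 := by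
  simp [rot, rotJ, Matrix.toLpLin_apply, dotProduct, Fin.sum_univ_two]

lemma rot_apply_one (x : Pt) : rot x 1 = x 0 := by
  simp [rot, rotJ, Matrix.toLpLin_apply, dotProduct, Fin.sum_univ_two]

lemma inner_rot_self (x : Pt) : ⟪x, rot x⟫ = 0 := by
  simp only [PiLp.inner_apply, Fin.sum_univ_two, rot_apply_zero, rot_apply_one,
    RCLike.inner_apply, Real.ringHom_apply]
  ring

lemma linearIndependent_rot {x : Pt} (hx : x ≠ 0) : LinearIndependent ℝ ![x, rot x] := by
  rw [linearIndependent_pair_iff, cross, rot_apply_zero, rot_apply_one]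
  intro h
  apply hx
  ext c
  fin_cases c <;> simp <;> nlinarith [sq_nonneg (x 0), sq_nonneg (x 1)]

end Pt

section Configurations

variable {ι : Type*}

noncomputable def ptL [Fintype ι] (i : ι) : Conf ι →L[ℝ] Pt :=
  LinearMap.toContinuousLinearMap
    { toFun := fun q => pt q i
      map_add' := fun _ _ => rfl
      map_smul' := fun _ _ => rfl }

@[simp] lemma ptL_apply [Fintype ι] (i : ι) (q : Conf ι) : ptL i q = pt q i := rfl

@[simp] lemma pt_add (q q' : Conf ι) (i : ι) : pt (q + q') i = pt q i + pt q' i := rfl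

@[simp] lemma pt_smul (a : ℝ) (q : Conf ι) (i : ι) : pt (a • q) i = a • pt q i := rfl

@[simp] lemma pt_zero (i : ι) : pt (0 : Conf ι) i = 0 := rfl

@[simp] lemma pt_apply (p : Conf ι) (i : ι) (c : Fin 2) : pt p i c = p (i, c) := rfl

lemma pt_infRot (p : Conf ι) (i : ι) : pt (infRot p) i = Pt.rot (pt p i) := rfl

lemma pt_transl (c : Fin 2) (i : ι) : pt (transl ι c) i = EuclideanSpace.single c 1 := by
  ext c'
  simp [transl, eq_comm]

end Configurations

section InfinitesimalMotions

variable {ι : Type*}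

def infinitesimalMotions (G : SimpleGraph ι) (p : Conf ι) : Submodule ℝ (Conf ι) where
  carrier := {q | ∀ i j, G.Adj i j → ⟪pt p i - pt p j, pt q i - pt q j⟫ = 0}
  add_mem' {q q'} hq hq' i j h := by
    rw [pt_add, pt_add, add_sub_add_comm, inner_add_right, hq i j h, hq' i j h, add_zero]
  zero_mem' i j _ := by simp
  smul_mem' a q hq i j h := by
    rw [pt_smul, pt_smul, ← smul_sub, inner_smul_right, hq i j h, mul_zero]

variable {G : SimpleGraph ι} {p : Conf ι}

lemma mem_infinitesimalMotions {q : Conf ι} :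
    q ∈ infinitesimalMotions G p ↔ ∀ i j, G.Adj i j → ⟪pt p i - pt p j, pt q i - pt q j⟫ = 0 :=
  Iff.rfl

lemma infinitesimalMotions_eq_top_of_subsingleton [Subsingleton ι] :
    infinitesimalMotions G p = ⊤ :=
  eq_top_iff.mpr fun _ _ i j h => absurd (Subsingleton.elim i j) (G.ne_of_adj h)

lemma orbitTangent_le_infinitesimalMotions : orbitTangent p ≤ infinitesimalMotions G p := by
  rw [orbitTangent, Submodule.span_le]
  rintro q (rfl | rfl | rfl) i j _
  · rw [pt_infRot, pt_infRot, ← map_sub, Pt.inner_rot_self]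
  all_goals simp [pt_transl]

lemma linearIndependent_infRot_transl {i j : ι} (hij : pt p i ≠ pt p j) :
    LinearIndependent ℝ ![infRot p, transl ι 0, transl ι 1] := by
  rw [Fintype.linearIndependent_iff]
  intro g hg
  simp only [Fin.sum_univ_three, Matrix.cons_val_zero, Matrix.cons_val_one, Matrix.cons_val_two,
    Matrix.head_cons, Matrix.tail_cons] at hg
  have hrot : g 0 • Pt.rot (pt p i - pt p j) = 0 := by
    have := congrArg (fun q => pt q i - pt q j) hg
    simpa [pt_infRot, pt_transl, smul_sub] using this
  have hg0 : g 0 = 0 := by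
    refine (smul_eq_zero.mp hrot).resolve_right ?_
    simpa using (Pt.linearIndependent_rot (sub_ne_zero.mpr hij)).ne_zero 1
  have := congrArg (fun q => pt q i) hg
  simp only [hg0, pt_add, pt_smul, pt_transl, zero_smul, zero_add, pt_zero] at this
  have h1 := congrArg (· 0) this
  have h2 := congrArg (· 1) this
  simp only [PiLp.add_apply, PiLp.smul_apply, PiLp.single_eq_same, smul_eq_mul, mul_one, ne_eq,
    zero_ne_one, one_ne_zero, not_false_eq_true, PiLp.single_eq_of_ne, mul_zero, add_zero,
    zero_add, PiLp.zero_apply] at h1 h2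
  intro k
  fin_cases k <;> simp [hg0, h1, h2]

lemma finrank_orbitTangent {i j : ι} (hij : pt p i ≠ pt p j) :
    Module.finrank ℝ (orbitTangent p) = 3 := by
  have hrange : Set.range ![infRot p, transl ι 0, transl ι 1] =
      {infRot p, transl ι 0, transl ι 1} := by
    rw [Matrix.range_cons, Matrix.range_cons_cons_empty, Set.singleton_union]
  have := finrank_span_eq_card (linearIndependent_infRot_transl hij)
  rwa [hrange, Fintype.card_fin] at this

end InfinitesimalMotions

lemma eq_zero_of_mem_infinitesimalMotions_of_is3Cycle {ι : Type*} {G : SimpleGraph ι}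
    {p q : Conf ι} (hsr : StronglyRigid G p) (hq : q ∈ infinitesimalMotions G p) {i j k : ι}
    (hijk : Is3Cycle G i j k) (hj : pt q j = 0) (hk : pt q k = 0) : pt q i = 0 := by
  have orth : ∀ l, G.Adj l i → pt q l = 0 → ⟪pt p l - pt p i, pt q i⟫ = 0 := fun l hl hl0 => by
    simpa [hl0] using hq l i hl
  exact eq_zero_of_inner_eq_zero_of_linearIndependent finrank_euclideanSpace_fin (hsr i j k hijk)
    (orth j hijk.1.symm hj) (orth k hijk.2.1.symm hk)

namespace Henneberg

variable {ι : Type*} {G : SimpleGraph ι} (H : Henneberg G)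

def v₀ : ι := H.ord ⟨0, by have := H.two_le; omega⟩

def v₁ : ι := H.ord ⟨1, by have := H.two_le; omega⟩

lemma adj_v₀_v₁ : G.Adj H.v₀ H.v₁ := (H.edge_iff _ _).mpr (Or.inl rfl)

lemma is3Cycle {l : Fin (Nat.card ι)} (hl : 2 ≤ (l : ℕ)) :
    Is3Cycle G (H.ord l) (H.ord (H.par1 l)) (H.ord (H.par2 l)) :=
  ⟨((H.edge_iff _ _).mpr (Or.inr ⟨l, hl, Or.inl rfl⟩)).symm,
    ((H.edge_iff _ _).mpr (Or.inr ⟨l, hl, Or.inr rfl⟩)).symm, H.par_adj l hl⟩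

variable {H} {p q : Conf ι}

lemma eq_zero_of_mem_infinitesimalMotions (hsr : StronglyRigid G p)
    (hq : q ∈ infinitesimalMotions G p) (h₀ : pt q H.v₀ = 0) (h₁ : pt q H.v₁ = 0) : q = 0 := by
  have hord : ∀ l, pt q (H.ord l) = 0 := by
    intro l
    induction l using WellFoundedLT.induction with
    | _ l ih =>
      by_cases hl : 2 ≤ (l : ℕ)
      · exact eq_zero_of_mem_infinitesimalMotions_of_is3Cycle hsr hq (H.is3Cycle hl)
          (ih _ (H.par1_lt l hl)) (ih _ (H.par2_lt l hl))
      · obtain ⟨_ | _ | m, hm⟩ := l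
        exacts [h₀, h₁, absurd hl (by simp)]
  ext ⟨i, c⟩
  simpa using congrArg (· c) (hord (H.ord.symm i))

variable [Fintype ι]

lemma finrank_infinitesimalMotions_le (H : Henneberg G) (hp : p ∈ configSpace G)
    (hsr : StronglyRigid G p) :
    Module.finrank ℝ (infinitesimalMotions G p) ≤ 3 := by
  set d := pt p H.v₁ - pt p H.v₀
  let ψ : Conf ι →ₗ[ℝ] Pt × ℝ :=
    LinearMap.prod (ptL H.v₀) ((innerSL ℝ (Pt.rot d)).comp (ptL H.v₁))
  have hψ : Function.Injective (ψ.domRestrict (infinitesimalMotions G p)) := by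
    rw [← LinearMap.ker_eq_bot, LinearMap.ker_eq_bot']
    rintro ⟨q, hq⟩ hψq
    obtain ⟨h₀, hrot⟩ := Prod.mk_eq_zero.mp hψq
    replace h₀ : pt q H.v₀ = 0 := h₀
    have h₁ : pt q H.v₁ = 0 := by
      refine eq_zero_of_inner_eq_zero_of_linearIndependent finrank_euclideanSpace_fin
        (Pt.linearIndependent_rot (sub_ne_zero.mpr (hp _ _ H.adj_v₀_v₁).symm)) ?_ hrot
      simpa [h₀] using hq _ _ H.adj_v₀_v₁.symm
    exact Subtype.ext (eq_zero_of_mem_infinitesimalMotions hsr hq h₀ h₁)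
  simpa [Module.finrank_prod] using LinearMap.finrank_le_finrank_of_injective hψ

lemma infinitesimalMotions_eq_orbitTangent (H : Henneberg G) (hp : p ∈ configSpace G)
    (hsr : StronglyRigid G p) :
    infinitesimalMotions G p = orbitTangent p := by
  refine (Submodule.eq_of_le_of_finrank_le orbitTangent_le_infinitesimalMotions ?_).symm
  rw [finrank_orbitTangent (hp _ _ H.adj_v₀_v₁)]
  exact H.finrank_infinitesimalMotions_le hp hsr

end Henneberg

section DistanceMap

variable {ι : Type*} [Fintype ι] (G : SimpleGraph ι) (p : Conf ι)

open Classical in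
lemma hasFDerivAt_rhoMap : HasFDerivAt (rhoMap G)
    (ContinuousLinearMap.pi fun ij : ι × ι => if G.Adj ij.1 ij.2 then
      2 • (innerSL ℝ (pt p ij.1 - pt p ij.2)).comp (ptL ij.1 - ptL ij.2) else 0) p := by
  refine hasFDerivAt_pi.mpr fun ⟨i, j⟩ => ?_
  by_cases h : G.Adj i j
  · simp only [rhoMap, if_pos h, dist_eq_norm]
    exact (ptL i - ptL j).hasFDerivAt.norm_sq
  · simp only [rhoMap, if_neg h]
    exact hasFDerivAt_const 0 p

lemma ker_fderiv_rhoMap :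
    LinearMap.ker (fderiv ℝ (rhoMap G) p).toLinearMap = infinitesimalMotions G p := by
  ext q
  rw [(hasFDerivAt_rhoMap G p).fderiv, LinearMap.mem_ker, mem_infinitesimalMotions]
  simp only [funext_iff, ContinuousLinearMap.coe_coe, ContinuousLinearMap.pi_apply, Pi.zero_apply,
    Prod.forall]
  refine forall₂_congr fun i j => ?_
  by_cases h : G.Adj i j <;> simp [h, inner_sub_left, inner_sub_right]

lemma finrank_range_fderiv_rhoMap_add :
    Module.finrank ℝ (LinearMap.range (fderiv ℝ (rhoMap G) p).toLinearMap) +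
      Module.finrank ℝ (infinitesimalMotions G p) = 2 * Fintype.card ι := by
  rw [← ker_fderiv_rhoMap, LinearMap.finrank_range_add_finrank_ker, finrank_euclideanSpace,
    Fintype.card_prod, Fintype.card_fin, mul_comm]

end DistanceMap

section Genericity

variable {ι : Type*}

lemma isOpen_configSpace [Fintype ι] (G : SimpleGraph ι) : IsOpen (configSpace G) := by
  simp only [configSpace, Set.ofPred_forall]
  exact isOpen_iInter_of_finite fun i => isOpen_iInter_of_finite fun j =>
    isOpen_iInter_of_finite fun _ => isOpen_ne_fun (ptL i).continuous (ptL j).continuous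

lemma analyticAt_cross_sub [Fintype ι] (i j k : ι) (x : Conf ι) :
    AnalyticAt ℝ (fun p : Conf ι => Pt.cross (pt p j - pt p i) (pt p k - pt p i)) x := by
  have hc : ∀ l c, AnalyticAt ℝ (fun p : Conf ι => pt p l c) x := fun l c =>
    (EuclideanSpace.proj (l, c) : Conf ι →L[ℝ] ℝ).analyticAt x
  simp only [Pt.cross, PiLp.sub_apply]
  fun_prop

lemma isOpen_setOf_cross_sub_ne_zero [Fintype ι] (i j k : ι) :
    IsOpen {p : Conf ι | Pt.cross (pt p j - pt p i) (pt p k - pt p i) ≠ 0} :=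
  isOpen_ne_fun
    (continuous_iff_continuousAt.mpr fun x => (analyticAt_cross_sub i j k x).continuousAt)
    continuous_const

lemma exists_cross_sub_ne_zero {i j k : ι} (hij : i ≠ j) (hik : i ≠ k) (hjk : j ≠ k) :
    ∃ p : Conf ι, Pt.cross (pt p j - pt p i) (pt p k - pt p i) ≠ 0 :=
  by classical
  exact ⟨EuclideanSpace.single (j, 0) 1 + EuclideanSpace.single (k, 1) 1, by
    simp [Pt.cross, hij, hik, hjk, hjk.symm]⟩

lemma setOf_stronglyRigid_eq (G : SimpleGraph ι) :
    {p : Conf ι | StronglyRigid G p} = ⋂ t : {t : ι × ι × ι // Is3Cycle G t.1 t.2.1 t.2.2},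
      {p | Pt.cross (pt p t.1.2.1 - pt p t.1.1) (pt p t.1.2.2 - pt p t.1.1) ≠ 0} := by
  ext p
  simp [StronglyRigid, Pt.linearIndependent_pair_iff]

lemma isOpen_setOf_stronglyRigid [Fintype ι] (G : SimpleGraph ι) :
    IsOpen {p : Conf ι | StronglyRigid G p} := by
  rw [setOf_stronglyRigid_eq]
  exact isOpen_iInter_of_finite fun ⟨⟨i, j, k⟩, _⟩ => isOpen_setOf_cross_sub_ne_zero i j k

lemma dense_setOf_stronglyRigid [Fintype ι] (G : SimpleGraph ι) :
    Dense {p : Conf ι | StronglyRigid G p} := by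
  rw [setOf_stronglyRigid_eq]
  refine dense_iInter_of_isOpen (fun ⟨⟨i, j, k⟩, _⟩ => isOpen_setOf_cross_sub_ne_zero i j k)
    fun ⟨⟨i, j, k⟩, hij, hik, hjk⟩ => ?_
  exact dense_setOf_ne_zero_of_analyticAt (analyticAt_cross_sub i j k)
    (exists_cross_sub_ne_zero hij.ne hik.ne hjk.ne)

end Genericity

/-- Proposition 2.3 of the paper. For a triangulated Laman graph `G` on
`n` vertices, every strongly rigid configuration is infinitesimally rigid (the Jacobian of
the distance map has rank `2n - 3`), and the strongly rigid configurations form an open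
dense subset of `P_G`. -/
theorem stmt12 {ι : Type*} [Fintype ι] (n : ℕ) (hcard : Fintype.card ι = n)
    (G : SimpleGraph ι) (hG : IsTriangulatedLaman G) :
    (∀ p ∈ configSpace G, StronglyRigid G p →
      Module.finrank ℝ ↥(LinearMap.range (fderiv ℝ (rhoMap G) p).toLinearMap)
        = 2 * n - 3) ∧
    IsOpen {p : Conf ι | p ∈ configSpace G ∧ StronglyRigid G p} ∧
    configSpace G ⊆ closure {p : Conf ι | p ∈ configSpace G ∧ StronglyRigid G p} := by
  refine ⟨fun p hp hsr => ?_, (isOpen_configSpace G).inter (isOpen_setOf_stronglyRigid G),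
    (dense_setOf_stronglyRigid G).open_subset_closure_inter (isOpen_configSpace G)⟩
  have hrank := finrank_range_fderiv_rhoMap_add G p
  rcases hG with hsmall | ⟨⟨H⟩⟩
  · have : Subsingleton ι := Finite.card_le_one_iff_subsingleton.mp hsmall
    rw [infinitesimalMotions_eq_top_of_subsingleton, finrank_top, finrank_euclideanSpace,
      Fintype.card_prod, Fintype.card_fin] at hrank
    rw [Nat.card_eq_fintype_card] at hsmall
    omega
  · rw [H.infinitesimalMotions_eq_orbitTangent hp hsr,
      finrank_orbitTangent (hp _ _ H.adj_v₀_v₁)] at hrank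
    omega
end

section
/- Let G be a triangulated Laman graph, and let the formation control system induced by G have continuously differentiable control laws u_{ij}(·, d̄_{ij}). Let p ∈ P_G be an equilibrium of this system, and let {(G_i, p_i)}_{i=1}^m be the frameworks associated with the independent partition for (G,p). Then each p_i is an equilibrium of the subsystem induced by G_i (the formation control system induced by G_i with the same control laws u_{ij} for (i,j) ∈ E_i). -/
open scoped BigOperators

/-! Encode the control laws at `p` as the edge stress `w s(i, j) = u_ij(‖x_i - x_j‖)`, so that
`p` is an equilibrium of the system induced by a set of edges `C` iff the stress restricted to
`C` exerts no force on any vertex. Rebuild `G` along its Henneberg sequence. When `k` is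
attached to `a` and `b`, the balance at `k` reads `w_ak (x_a - x_k) + w_bk (x_b - x_k) = 0`.
If `x_a, x_b, x_k` are not collinear this forces `w_ak = w_bk = 0`. Otherwise the two new edges
act on `a` and `b` exactly like the single stress `w_ak w_bk / (w_ak + w_bk)` on `ab` (springs in
series), and in that case `ak, bk, ab` lie in one class. Either way, moving that stress onto
`ab` yields an equilibrium stress on the previous graph which exerts the same forces as the old
one on every union of classes, and induction applies. -/

section SeriesReduction

variable {E : Type*} [AddCommGroup E] [Module ℝ E]

lemma smul_eq_series_smul {u v : E} (huv : u ≠ v) {r s : ℝ} (h : r • u + s • v = 0) :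
    r • u = (r * s / (r + s)) • (u - v) := by
  by_cases hrs : r + s = 0
  -- then `r = 0`, so the junk value `r * s / 0 = 0` is the right coefficient
  · obtain rfl : s = -r := by linarith
    have hr : r • (u - v) = 0 := by rwa [smul_sub, sub_eq_add_neg, ← neg_smul]
    simp [(smul_eq_zero.mp hr).resolve_right (sub_ne_zero.mpr huv)]
  · have key : (r + s) • (r • u) = (r * s) • (u - v) := by
      calc (r + s) • (r • u) = r • (r • u + s • u) := by rw [smul_comm, add_smul]
        _ = r • (s • u - s • v) := by rw [eq_neg_of_add_eq_zero_left h, sub_eq_neg_add]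
        _ = (r * s) • (u - v) := by rw [mul_smul, smul_sub s]
    rw [div_eq_inv_mul, mul_smul, ← key, inv_smul_smul₀ hrs]

lemma coeffs_eq_zero_of_not_collinear {a b k : E} (h : ¬ Collinear ℝ {a, b, k}) {r s : ℝ}
    (hk : r • (a - k) + s • (b - k) = 0) : r = 0 ∧ s = 0 := by
  have hr : r = 0 := by
    by_contra hr
    refine h (collinear_insert_of_mem_affineSpan_pair ?_)
    rw [Set.pair_comm]
    convert smul_vsub_vadd_mem_affineSpan_pair (-s / r) k b using 1
    rw [vsub_eq_sub, vadd_eq_add, div_eq_inv_mul, mul_smul, neg_smul,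
      neg_eq_of_add_eq_zero_left hk, inv_smul_smul₀ hr, sub_add_cancel]
  have hs : s = 0 ∨ b = k := by simpa [hr, sub_eq_zero] using hk
  refine ⟨hr, hs.resolve_right fun hbk => h ?_⟩
  rw [hbk, Set.pair_eq_singleton]
  exact collinear_pair ℝ a k

end SeriesReduction

namespace Set

variable {α M : Type*} [DecidableEq α] {S : Set α} {e : α}

lemma indicator_single_of_mem [Zero M] (h : e ∈ S) (r : M) :
    S.indicator (Pi.single e r) = Pi.single e r :=
  indicator_eq_self.2 (Pi.support_single_subset.trans (singleton_subset_iff.2 h))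

lemma indicator_single_of_notMem [Zero M] (h : e ∉ S) (r : M) :
    S.indicator (Pi.single e r) = 0 :=
  indicator_eq_zero.2 <|
    disjoint_of_subset_left Pi.support_single_subset (disjoint_singleton_left.2 h)

lemma indicator_insert_of_notMem [AddZeroClass M] (h : e ∉ S) (f : α → M) :
    (insert e S).indicator f = Pi.single e (f e) + S.indicator f := by
  rw [insert_eq, indicator_union_of_disjoint (disjoint_singleton_left.2 h), indicator_singleton]
  rfl

end Set

section StressForce

variable {ι E : Type*} [Fintype ι] [AddCommGroup E] [Module ℝ E]

def stressForce (w : Sym2 ι → ℝ) (x : ι → E) (i : ι) : E :=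
  ∑ j, w s(i, j) • (x j - x i)

lemma stressForce_add (w w' : Sym2 ι → ℝ) (x : ι → E) :
    stressForce (w + w') x = stressForce w x + stressForce w' x := by
  ext i
  simp only [stressForce, Pi.add_apply, add_smul, Finset.sum_add_distrib]

lemma stressForce_zero (x : ι → E) : stressForce (0 : Sym2 ι → ℝ) x = 0 := by
  ext i
  simp [stressForce]

lemma stressForce_apply_eq_zero {w : Sym2 ι → ℝ} {i : ι} (h : ∀ j, w s(i, j) = 0) (x : ι → E) :
    stressForce w x i = 0 := by
  simp [stressForce, h]

variable [DecidableEq ι]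

lemma stressForce_single (u v : ι) (r : ℝ) (x : ι → E) :
    stressForce (Pi.single s(u, v) r) x =
      Pi.single u (r • (x v - x u)) + Pi.single v (r • (x u - x v)) := by
  ext i
  by_cases hiu : i = u
  · subst hiu
    by_cases hiv : i = v
    · subst hiv
      simp [stressForce, Pi.single_apply]
    · simp [stressForce, Pi.single_apply, hiv]
  · by_cases hiv : i = v
    · subst hiv
      simp [stressForce, Pi.single_apply, Sym2.eq_swap (a := u), hiu]
    · have hne : ∀ j, s(i, j) ≠ s(u, v) := fun j h => by
        rcases Sym2.mem_iff.mp (h ▸ Sym2.mem_mk_left i j) with h | h <;> contradiction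
      simp [stressForce, hne, hiu, hiv]

lemma stressForce_single_add_single_eq_series {x : ι → E} {a b k : ι} (hab : x a ≠ x b)
    {r s : ℝ} (hk : r • (x a - x k) + s • (x b - x k) = 0) :
    stressForce (Pi.single s(a, k) r + Pi.single s(b, k) s) x =
      stressForce (Pi.single s(a, b) (r * s / (r + s))) x := by
  have hseries := smul_eq_series_smul (sub_left_injective.ne hab) hk
  rw [sub_sub_sub_cancel_right] at hseries
  have ha : r • (x k - x a) = (r * s / (r + s)) • (x b - x a) := by
    rw [← neg_sub, smul_neg, hseries, ← smul_neg, neg_sub]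
  have hb : s • (x k - x b) = (r * s / (r + s)) • (x a - x b) := by
    rw [← neg_sub, smul_neg, neg_eq_of_add_eq_zero_left hk, hseries]
  rw [stressForce_add, stressForce_single, stressForce_single, stressForce_single, ha, hb,
    add_add_add_comm, ← Pi.single_add, hk, Pi.single_zero, add_zero]

lemma stressForce_indicator_single_add_single_eq_series {S : Set (Sym2 ι)} {x : ι → E}
    {a b k : ι} (hab : x a ≠ x b) {r s : ℝ} (hk : r • (x a - x k) + s • (x b - x k) = 0)
    (hS : Collinear ℝ {x a, x b, x k} → (s(a, k) ∈ S ↔ s(a, b) ∈ S) ∧ (s(b, k) ∈ S ↔ s(a, b) ∈ S)) :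
    stressForce (S.indicator (Pi.single s(a, k) r + Pi.single s(b, k) s)) x =
      stressForce (S.indicator (Pi.single s(a, b) (r * s / (r + s)))) x := by
  by_cases hcol : Collinear ℝ {x a, x b, x k}
  · obtain ⟨hSa, hSb⟩ := hS hcol
    rw [Set.indicator_add']
    by_cases habS : s(a, b) ∈ S
    · rw [Set.indicator_single_of_mem (hSa.2 habS), Set.indicator_single_of_mem (hSb.2 habS),
        Set.indicator_single_of_mem habS]
      exact stressForce_single_add_single_eq_series hab hk
    · rw [Set.indicator_single_of_notMem (mt hSa.1 habS),
        Set.indicator_single_of_notMem (mt hSb.1 habS), Set.indicator_single_of_notMem habS,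
        add_zero]
  · obtain ⟨rfl, rfl⟩ := coeffs_eq_zero_of_not_collinear hcol hk
    simp

end StressForce

namespace Henneberg

variable {ι : Type*} {G : SimpleGraph ι} (H : Henneberg G)

def initialEdge : Sym2 ι :=
  s(H.ord ⟨0, by have := H.two_le; omega⟩, H.ord ⟨1, by have := H.two_le; omega⟩)

/-- The edges present once `ord 0, …, ord t` have been placed (for `t ≥ 1`). -/
def edgesUpTo (t : ℕ) : Set (Sym2 ι) :=
  {e | e = H.initialEdge ∨
    ∃ l : Fin (Nat.card ι), 2 ≤ (l : ℕ) ∧ (l : ℕ) ≤ t ∧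
      (e = s(H.ord (H.par1 l), H.ord l) ∨ e = s(H.ord (H.par2 l), H.ord l))}

variable {H}

lemma mem_edgesUpTo_of_adj {t : ℕ} {u v : ι} (huv : G.Adj u v)
    (hu : (H.ord.symm u : ℕ) ≤ t) (hv : (H.ord.symm v : ℕ) ≤ t) : s(u, v) ∈ H.edgesUpTo t := by
  rcases (H.edge_iff u v).mp huv with h | ⟨l, hl, h⟩
  · exact Or.inl h
  · have hmem : H.ord l ∈ s(u, v) := by rcases h with h | h <;> simp [h]
    refine Or.inr ⟨l, hl, ?_, h⟩
    rcases Sym2.mem_iff.mp hmem with rfl | rfl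
    · simpa using hu
    · simpa using hv

lemma edgesUpTo_last : H.edgesUpTo (Nat.card ι - 1) = G.edgeSet := by
  ext e
  induction e using Sym2.ind with
  | _ u v =>
    refine ⟨fun h => (H.edge_iff u v).mpr ?_, fun h => mem_edgesUpTo_of_adj h ?_ ?_⟩
    · rcases h with h | ⟨l, hl, -, h⟩
      exacts [Or.inl h, Or.inr ⟨l, hl, h⟩]
    · have := (H.ord.symm u).isLt; omega
    · have := (H.ord.symm v).isLt; omega

lemma edgesUpTo_one : H.edgesUpTo 1 = {H.initialEdge} := by
  ext e
  simp only [edgesUpTo, Set.mem_ofPred_eq, Set.mem_singleton_iff, or_iff_left_iff_imp]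
  rintro ⟨l, hl, hl', -⟩
  omega

lemma ord_notMem_of_mem_edgesUpTo {t : ℕ} (ht : 1 ≤ t) {l : Fin (Nat.card ι)} (hl : t < l)
    {e : Sym2 ι} (he : e ∈ H.edgesUpTo t) : H.ord l ∉ e := by
  intro hmem
  rcases he with rfl | ⟨m, hm, hmt, rfl | rfl⟩ <;>
    rcases Sym2.mem_iff.mp hmem with h | h <;> have := congrArg Fin.val (H.ord.injective h)
  · simp only at this; omega
  · simp only at this; omega
  · have := H.par1_lt m hm; omega
  · omega
  · have := H.par2_lt m hm; omega
  · omega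

lemma edgesUpTo_succ {t : ℕ} (ht : 1 ≤ t) (l : Fin (Nat.card ι)) (hl : (l : ℕ) = t + 1) :
    H.edgesUpTo (t + 1) = insert s(H.ord (H.par1 l), H.ord l)
      (insert s(H.ord (H.par2 l), H.ord l) (H.edgesUpTo t)) := by
  ext e
  simp only [edgesUpTo, Set.mem_ofPred_eq, Set.mem_insert_iff]
  constructor
  · rintro (h | ⟨m, hm, hmt, h⟩)
    · exact Or.inr (Or.inr (Or.inl h))
    · rcases (Nat.lt_or_eq_of_le hmt) with hmt | hmt
      · exact Or.inr (Or.inr (Or.inr ⟨m, hm, by omega, h⟩))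
      · obtain rfl : m = l := Fin.ext (by omega)
        tauto
  · rintro (h | h | h | ⟨m, hm, hmt, h⟩)
    · exact Or.inr ⟨l, by omega, hl.le, Or.inl h⟩
    · exact Or.inr ⟨l, by omega, hl.le, Or.inr h⟩
    · exact Or.inl h
    · exact Or.inr ⟨m, hm, by omega, h⟩

lemma indicator_edgesUpTo_succ [DecidableEq ι] {t : ℕ} (ht : 1 ≤ t) (l : Fin (Nat.card ι))
    (hl : (l : ℕ) = t + 1) (w : Sym2 ι → ℝ) :
    (H.edgesUpTo (t + 1)).indicator w = (H.edgesUpTo t).indicator w +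
      (Pi.single s(H.ord (H.par1 l), H.ord l) (w s(H.ord (H.par1 l), H.ord l)) +
        Pi.single s(H.ord (H.par2 l), H.ord l) (w s(H.ord (H.par2 l), H.ord l))) := by
  have hkE : ∀ e ∈ H.edgesUpTo t, H.ord l ∉ e :=
    fun e he => ord_notMem_of_mem_edgesUpTo ht (by omega) he
  have hbkE : s(H.ord (H.par2 l), H.ord l) ∉ H.edgesUpTo t :=
    fun h => hkE _ h (Sym2.mem_mk_right _ _)
  have hakE :
      s(H.ord (H.par1 l), H.ord l) ∉ insert s(H.ord (H.par2 l), H.ord l) (H.edgesUpTo t) := by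
    rintro (h | h)
    · exact H.par_ne l (by omega) (H.ord.injective (Sym2.congr_left.mp h))
    · exact hkE _ h (Sym2.mem_mk_right _ _)
  rw [edgesUpTo_succ ht l hl, Set.indicator_insert_of_notMem hakE,
    Set.indicator_insert_of_notMem hbkE, ← add_assoc, add_comm]

variable [Fintype ι] [DecidableEq ι] {p : Conf ι}

lemma exists_stressForce_indicator_edgesUpTo_succ (hp : p ∈ configSpace G) {t : ℕ} (ht : 1 ≤ t)
    (htn : t + 1 < Nat.card ι) {w : Sym2 ι → ℝ}
    (hw : stressForce ((H.edgesUpTo (t + 1)).indicator w) (pt p) = 0) :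
    ∃ w' : Sym2 ι → ℝ, ∀ S : Set (Sym2 ι), (∀ e e', triGen H p e e' → (e ∈ S ↔ e' ∈ S)) →
      stressForce (S.indicator ((H.edgesUpTo (t + 1)).indicator w)) (pt p) =
        stressForce (S.indicator ((H.edgesUpTo t).indicator w')) (pt p) := by
  set l : Fin (Nat.card ι) := ⟨t + 1, htn⟩
  have h2 : 2 ≤ (l : ℕ) := Nat.succ_le_succ ht
  have hsplit := indicator_edgesUpTo_succ (H := H) ht l rfl w
  set a := H.ord (H.par1 l)
  set b := H.ord (H.par2 l)
  set k := H.ord l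
  have habE : s(a, b) ∈ H.edgesUpTo t := by
    refine mem_edgesUpTo_of_adj (H.par_adj l h2) ?_ ?_
    · simpa [a, l, Nat.lt_succ_iff] using Fin.lt_def.mp (H.par1_lt l h2)
    · simpa [b, l, Nat.lt_succ_iff] using Fin.lt_def.mp (H.par2_lt l h2)
  have hbal : w s(a, k) • (pt p a - pt p k) + w s(b, k) • (pt p b - pt p k) = 0 := by
    have hkE : ∀ j, (H.edgesUpTo t).indicator w s(k, j) = 0 := fun j =>
      Set.indicator_of_notMem (fun h => ord_notMem_of_mem_edgesUpTo ht (by simp [l]) h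
        (Sym2.mem_mk_left _ _)) _
    have hak : k ≠ a := fun h => (H.par1_lt l h2).ne' (H.ord.injective h)
    have hbk : k ≠ b := fun h => (H.par2_lt l h2).ne' (H.ord.injective h)
    have hk := congrFun hw k
    rw [hsplit, stressForce_add, Pi.add_apply, stressForce_apply_eq_zero hkE, zero_add,
      stressForce_add, stressForce_single, stressForce_single] at hk
    simpa [Pi.single_apply, hak, hbk] using hk
  refine ⟨w + Pi.single s(a, b) (w s(a, k) * w s(b, k) / (w s(a, k) + w s(b, k))), fun S hS => ?_⟩
  have hS_step := stressForce_indicator_single_add_single_eq_series (S := S)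
    (hp a b (H.par_adj l h2)) hbal
    fun hcol => ⟨hS _ _ ⟨l, h2, hcol, rfl, Or.inl rfl⟩, hS _ _ ⟨l, h2, hcol, rfl, Or.inr rfl⟩⟩
  rw [hsplit, Set.indicator_add', stressForce_add, hS_step, ← stressForce_add,
    ← Set.indicator_add', Set.indicator_add' (H.edgesUpTo t), Set.indicator_single_of_mem habE]

lemma stressForce_indicator_edgesUpTo_eq_zero (hp : p ∈ configSpace G) {S : Set (Sym2 ι)}
    (hS : ∀ e e', triGen H p e e' → (e ∈ S ↔ e' ∈ S)) {t : ℕ} (ht : 1 ≤ t)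
    (htn : t < Nat.card ι) {w : Sym2 ι → ℝ}
    (hw : stressForce ((H.edgesUpTo t).indicator w) (pt p) = 0) :
    stressForce (S.indicator ((H.edgesUpTo t).indicator w)) (pt p) = 0 := by
  induction t, ht using Nat.le_induction generalizing w with
  | base =>
    rw [edgesUpTo_one, Set.indicator_singleton] at hw ⊢
    by_cases he : H.initialEdge ∈ S
    · rwa [Set.indicator_single_of_mem he]
    · rw [Set.indicator_single_of_notMem he, stressForce_zero]
  | succ t ht IH =>
    obtain ⟨w', hw'⟩ := exists_stressForce_indicator_edgesUpTo_succ hp ht htn hw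
    rw [hw' S hS]
    refine IH (by omega) ?_
    simpa [hw] using (hw' Set.univ (by simp)).symm

end Henneberg

lemma formationField_fromEdgeSet_eq_zero_iff {ι : Type*} [Fintype ι] {f : ι → ι → ℝ → ℝ}
    {p : Conf ι} {w : Sym2 ι → ℝ} (hw : ∀ i j, w s(i, j) = f i j (dist (pt p i) (pt p j)))
    (C : Set (Sym2 ι)) :
    formationField (SimpleGraph.fromEdgeSet C) f p = 0 ↔
      stressForce (C.indicator w) (pt p) = 0 := by
  have hcoord : ∀ i c, formationField (SimpleGraph.fromEdgeSet C) f p (i, c) =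
      stressForce (C.indicator w) (pt p) i c := by
    intro i c
    simp only [formationField, stressForce, WithLp.ofLp_sum, Finset.sum_apply]
    refine Finset.sum_congr rfl fun j _ => ?_
    by_cases hij : i = j
    · subst hij; simp
    · have hadj : (SimpleGraph.fromEdgeSet C).Adj i j ↔ s(i, j) ∈ C := by simp [hij]
      by_cases hC : s(i, j) ∈ C
      · rw [if_pos (hadj.2 hC), Set.indicator_of_mem hC, hw]
        rfl
      · rw [if_neg (mt hadj.1 hC), Set.indicator_of_notMem hC, zero_smul]
        rfl
  constructor
  · intro h
    funext i
    ext c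
    rw [← hcoord, h]
    rfl
  · intro h
    ext ⟨i, c⟩
    rw [hcoord, h]
    rfl

theorem stmt13_general {ι : Type*} [Fintype ι] [DecidableEq ι] (G : SimpleGraph ι)
    (H : Henneberg G)
    (f : ι → ι → ℝ → ℝ)
    (hfsymm : ∀ i j, f i j = f j i)
    (p : Conf ι) (hp : p ∈ configSpace G)
    (heq : formationField G f p = 0) :
    ∀ C ∈ indepPartition H p, formationField (SimpleGraph.fromEdgeSet C) f p = 0 := by
  rintro C ⟨e₀, -, rfl⟩
  obtain ⟨w, hw⟩ : ∃ w : Sym2 ι → ℝ, ∀ i j, w s(i, j) = f i j (dist (pt p i) (pt p j)) :=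
    ⟨Sym2.lift ⟨fun i j => f i j (dist (pt p i) (pt p j)),
      fun i j => by dsimp only; rw [hfsymm, dist_comm]⟩, fun _ _ => rfl⟩
  have hclass (e e' : Sym2 ι) (he : triGen H p e e') :
      Relation.EqvGen (triGen H p) e₀ e ↔ Relation.EqvGen (triGen H p) e₀ e' :=
    ⟨fun h => h.trans _ _ _ (.rel _ _ he), fun h => h.trans _ _ _ (.symm _ _ (.rel _ _ he))⟩
  have h2 := H.two_le
  rw [← G.fromEdgeSet_edgeSet, formationField_fromEdgeSet_eq_zero_iff hw,
    ← H.edgesUpTo_last] at heq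
  have hC := Henneberg.stressForce_indicator_edgesUpTo_eq_zero hp
    (S := {e | Relation.EqvGen (triGen H p) e₀ e}) hclass (by omega) (by omega) heq
  rw [Set.indicator_indicator, H.edgesUpTo_last, Set.inter_comm] at hC
  rwa [formationField_fromEdgeSet_eq_zero_iff hw]

/-- Proposition 4.1 of the paper. If `p` is an equilibrium of the
formation control system induced by a triangulated Laman graph `G` (with continuously
differentiable control laws), then for every class `C` of the independent partition for
`(G, p)`, the induced sub-configuration is an equilibrium of the subsystem induced by the
subgraph `G_C` (with the same control laws on the edges in `C`). -/
theorem stmt13 {ι : Type*} [Fintype ι] [DecidableEq ι] (G : SimpleGraph ι)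
    (hG : IsTriangulatedLaman G) (H : Henneberg G)
    (f : ι → ι → ℝ → ℝ) (hf : ∀ i j, ContDiffOn ℝ 1 (f i j) (Set.Ioi 0))
    (hfsymm : ∀ i j, f i j = f j i)
    (p : Conf ι) (hp : p ∈ configSpace G)
    (heq : formationField G f p = 0) :
    ∀ C ∈ indepPartition H p, formationField (SimpleGraph.fromEdgeSet C) f p = 0 :=
  stmt13_general G H f hfsymm p hp heq
end
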